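/- Let A_{n,1} and A_{n,2} be the (n+1)×(n+2) matrices with entries (A_{n,1})_{i,j} = a_{n−i}·δ_{i,j} and (A_{n,2})_{i,j} = a_i·δ_{i+1,j} (0-indexed, 0 ≤ i ≤ n, 0 ≤ j ≤ n+1), where a_k = (k+1)/√((2k+1)(2k+3)). Then the matrix A_{n,1}A_{n,2}^T − A_{n,2}A_{n,1}^T is skew-symmetric and its rank equals 2⌊(n+1)/2⌋. -/

import Mathlib

open Matrix

/-- Skew-symmetric tridiagonal matrix with superdiagonal `b`. -/
noncomputable def triSkew (b : ℕ → ℝ) (m : ℕ) : Matrix (Fin m) (Fin m) ℝ :=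
  Matrix.of fun i j =>
    if (j : ℕ) = (i : ℕ) + 1 then b i else if (i : ℕ) = (j : ℕ) + 1 then -(b j) else 0

lemma triSkew_transpose (b : ℕ → ℝ) (m : ℕ) : (triSkew b m)ᵀ = -(triSkew b m) := by
  ext i j
  simp only [transpose_apply, Matrix.neg_apply, triSkew, of_apply]
  split_ifs with h1 h2 h2 <;> first | omega | ring

lemma triSkew_det_step (b : ℕ → ℝ) (m : ℕ) :
    (triSkew b (m + 2)).det = b 0 ^ 2 * (triSkew (fun i => b (i + 2)) m).det := by
  rw [det_succ_row_zero]
  rw [Finset.sum_eq_single (1 : Fin (m + 2))]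
  · have h01 : triSkew b (m + 2) 0 1 = b 0 := by simp [triSkew]
    rw [h01, det_succ_column_zero, Finset.sum_eq_single (0 : Fin (m + 1))]
    · have hc0 : (1 : Fin (m + 2)).succAbove 0 = 0 := by
        rw [Fin.succAbove_of_castSucc_lt]
        · rfl
        · simp [Fin.lt_def]
      have hA10 : (triSkew b (m + 2)).submatrix Fin.succ (Fin.succAbove 1) 0 0 = -(b 0) := by
        simp [triSkew, hc0]
      have hsub : (((triSkew b (m + 2)).submatrix Fin.succ (Fin.succAbove 1)).submatrix
          (Fin.succAbove 0) Fin.succ) = triSkew (fun i => b (i + 2)) m := by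
        ext i j
        simp only [submatrix_apply, Fin.zero_succAbove]
        have hcol' : (1 : Fin (m + 2)).succAbove j.succ = j.succ.succ := by
          rw [Fin.succAbove_of_le_castSucc]
          simp [Fin.le_def]
        rw [hcol']
        simp only [triSkew, of_apply, Fin.val_succ]
        split_ifs with h1 h2 h2 <;> first | rfl | omega
      rw [hA10, hsub]
      have h1 : ((1 : Fin (m + 2)) : ℕ) = 1 := rfl
      have h0 : ((0 : Fin (m + 1)) : ℕ) = 0 := rfl
      rw [h1, h0]
      ring
    · intro i _ hi
      have : (triSkew b (m + 2)).submatrix Fin.succ (Fin.succAbove 1) i 0 = 0 := by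
        have hc0 : (1 : Fin (m + 2)).succAbove 0 = 0 := by
          rw [Fin.succAbove_of_castSucc_lt]
          · rfl
          · simp [Fin.lt_def]
        have hi' : (i : ℕ) ≠ 0 := fun h => hi (Fin.ext h)
        simp [triSkew, hc0, hi']
      rw [this]; ring
    · intro h; exact absurd (Finset.mem_univ _) h
  · intro j _ hj
    have hj' : (j : ℕ) ≠ 1 := by
      intro h; exact hj (Fin.ext (by simp [h]))
    have : triSkew b (m + 2) 0 j = 0 := by simp [triSkew, hj']
    rw [this]; ring
  · intro h; exact absurd (Finset.mem_univ _) h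

lemma triSkew_det_even : ∀ (k : ℕ) (b : ℕ → ℝ), (∀ i, b i ≠ 0) → (triSkew b (2 * k)).det ≠ 0 := by
  intro k
  induction k with
  | zero => intro b _; simp [Matrix.det_isEmpty]
  | succ k ih =>
    intro b hb
    show (triSkew b (2 * k + 2)).det ≠ 0
    rw [triSkew_det_step]
    exact mul_ne_zero (pow_ne_zero _ (hb 0)) (ih _ fun i => hb (i + 2))

lemma triSkew_det_odd (b : ℕ → ℝ) (m : ℕ) (hm : Odd m) : (triSkew b m).det = 0 := by
  have h := congrArg Matrix.det (triSkew_transpose b m)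
  rw [det_transpose, det_neg, Fintype.card_fin, Odd.neg_one_pow hm, neg_one_mul] at h
  linarith

lemma rank_le_of_det_zero {m : ℕ} (A : Matrix (Fin (m + 1)) (Fin (m + 1)) ℝ) (h : A.det = 0) :
    A.rank ≤ m := by
  obtain ⟨v, hv, hAv⟩ := (Matrix.exists_mulVec_eq_zero_iff).mpr h
  have hker : 0 < Module.finrank ℝ (LinearMap.ker A.mulVecLin) := by
    rw [Module.finrank_pos_iff]
    exact ⟨⟨⟨v, by simpa [Matrix.mulVecLin] using hAv⟩, 0, by simp [hv]⟩⟩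
  have hrn := LinearMap.finrank_range_add_finrank_ker A.mulVecLin
  rw [Module.finrank_pi, Fintype.card_fin] at hrn
  have : A.rank = Module.finrank ℝ (LinearMap.range A.mulVecLin) := rfl
  omega

lemma rank_submatrix_le' {p q : ℕ} (A : Matrix (Fin p) (Fin p) ℝ) (f g : Fin q → Fin p) :
    (A.submatrix f g).rank ≤ A.rank := by
  have h : A.submatrix f g =
      ((1 : Matrix (Fin p) (Fin p) ℝ).submatrix f (Equiv.refl _)) * A *
        ((1 : Matrix (Fin p) (Fin p) ℝ).submatrix (Equiv.refl _) g) := by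
    rw [Matrix.mul_submatrix_one, Matrix.one_submatrix_mul]
    simp
  rw [h]
  exact le_trans (rank_mul_le_left _ _) (rank_mul_le_right _ _)

lemma triSkew_rank (b : ℕ → ℝ) (hb : ∀ i, b i ≠ 0) (m : ℕ) :
    (triSkew b m).rank = 2 * (m / 2) := by
  rcases Nat.even_or_odd m with he | ho
  · obtain ⟨k, hk⟩ := he
    have hdet : (triSkew b m).det ≠ 0 := by
      rw [show m = 2 * k by omega]
      exact triSkew_det_even k b hb
    have := Matrix.rank_of_isUnit (triSkew b m)
      ((Matrix.isUnit_iff_isUnit_det _).mpr (isUnit_iff_ne_zero.mpr hdet))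
    rw [this, Fintype.card_fin]
    omega
  · obtain ⟨k, hk⟩ := ho
    subst hk
    have hub : (triSkew b (2 * k + 1)).rank ≤ 2 * k :=
      rank_le_of_det_zero _ (triSkew_det_odd b _ ⟨k, by ring⟩)
    have hsub : (triSkew b (2 * k + 1)).submatrix Fin.castSucc Fin.castSucc = triSkew b (2 * k) := by
      ext i j
      simp [triSkew]
    have hdet : (triSkew b (2 * k)).det ≠ 0 := triSkew_det_even k b hb
    have hrk : (triSkew b (2 * k)).rank = 2 * k := by
      have := Matrix.rank_of_isUnit (triSkew b (2 * k))
        ((Matrix.isUnit_iff_isUnit_det _).mpr (isUnit_iff_ne_zero.mpr hdet))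
      rw [this, Fintype.card_fin]
    have hlb := rank_submatrix_le' (triSkew b (2 * k + 1)) Fin.castSucc Fin.castSucc
    rw [hsub, hrk] at hlb
    omega

/-- The Legendre recurrence coefficient `a_k = (k+1)/√((2k+1)(2k+3))`. -/
noncomputable def legA (k : ℕ) : ℝ :=
  ((k : ℝ) + 1) / Real.sqrt ((2 * k + 1) * (2 * k + 3))

/-- The coefficient matrix `A_{n,1}`, with `(A_{n,1})_{i,j} = a_{n−i} δ_{i,j}`. -/
noncomputable def matA1 (n : ℕ) : Matrix (Fin (n + 1)) (Fin (n + 2)) ℝ :=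
  fun i j => if (i : ℕ) = (j : ℕ) then legA (n - i) else 0

/-- The coefficient matrix `A_{n,2}`, with `(A_{n,2})_{i,j} = a_i δ_{i+1,j}`. -/
noncomputable def matA2 (n : ℕ) : Matrix (Fin (n + 1)) (Fin (n + 2)) ℝ :=
  fun i j => if (i : ℕ) + 1 = (j : ℕ) then legA i else 0

lemma legA_pos (k : ℕ) : 0 < legA k := by
  unfold legA
  apply div_pos (by positivity)
  apply Real.sqrt_pos.mpr
  positivity

lemma comm_eq_triSkew (n : ℕ) :
    matA1 n * (matA2 n)ᵀ - matA2 n * (matA1 n)ᵀ =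
      triSkew (fun i => -(legA i * legA (n - 1 - i))) (n + 1) := by
  ext i j
  simp only [Matrix.sub_apply, mul_apply, transpose_apply, matA1, matA2, triSkew, of_apply]
  rw [Finset.sum_eq_single (Fin.castSucc i), Finset.sum_eq_single (Fin.succ i)]
  · have h1 : ((Fin.castSucc i : Fin (n + 2)) : ℕ) = (i : ℕ) := rfl
    have h2 : ((Fin.succ i : Fin (n + 2)) : ℕ) = (i : ℕ) + 1 := rfl
    rw [h1, h2, if_pos rfl, if_pos rfl]
    by_cases hji : (j : ℕ) + 1 = (i : ℕ)
    · have h2' : ¬((j : ℕ) = (i : ℕ) + 1) := by omega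
      rw [if_pos hji, if_neg h2', if_neg h2', if_pos (show (i : ℕ) = (j : ℕ) + 1 by omega)]
      rw [show n - (i : ℕ) = n - 1 - (j : ℕ) by omega]
      ring
    · by_cases hij : (j : ℕ) = (i : ℕ) + 1
      · rw [if_neg hji, if_pos hij, if_pos hij]
        rw [show n - (j : ℕ) = n - 1 - (i : ℕ) by omega]
        ring
      · rw [if_neg hji, if_neg hij, if_neg hij,
          if_neg (show ¬((i : ℕ) = (j : ℕ) + 1) by omega)]
        ring
  · intro k _ hk
    have hne : (i : ℕ) + 1 ≠ (k : ℕ) := by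
      intro h
      exact hk (Fin.ext h.symm)
    simp [hne]
  · intro h; exact absurd (Finset.mem_univ _) h
  · intro k _ hk
    have hne : (i : ℕ) ≠ (k : ℕ) := by
      intro h
      exact hk (Fin.ext h.symm)
    simp [hne]
  · intro h; exact absurd (Finset.mem_univ _) h

/-- The matrix `A_{n,1}A_{n,2}ᵀ − A_{n,2}A_{n,1}ᵀ` is skew-symmetric and has rank
`2⌊(n+1)/2⌋`. -/
theorem commutator_skew_rank (n : ℕ) :
    (matA1 n * (matA2 n)ᵀ - matA2 n * (matA1 n)ᵀ)ᵀ =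
        -(matA1 n * (matA2 n)ᵀ - matA2 n * (matA1 n)ᵀ) ∧
    (matA1 n * (matA2 n)ᵀ - matA2 n * (matA1 n)ᵀ).rank = 2 * ((n + 1) / 2) := by
  rw [comm_eq_triSkew]
  have hb : ∀ i, -(legA i * legA (n - 1 - i)) ≠ 0 := fun i =>
    neg_ne_zero.mpr (ne_of_gt (mul_pos (legA_pos i) (legA_pos _)))
  exact ⟨triSkew_transpose _ _, triSkew_rank _ hb (n + 1)⟩
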